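/- Let d = 2h with h > 2 and let 1 < j < h. Set Π := ∏_{l=0}^{h−1} (l·v + (d−l)·u) and let D_j ∈ R be the unique polynomial with (u−v)·D_j = ∏_{l=h−j+1}^{h} (l·v + (d−l)·u) − ∏_{l=0}^{j−1} (l·v + (d−l)·u). Then ∂(Π·D_j) does not belong to the ideal of R generated by (u+v)·∂Π and (u+v)·Π. -/

import Mathlib

/-!
Suppose `∂(ΠD) = c₁·(u+v)·∂Π + c₂·(u+v)·Π`. Since `Π`, `D`, `∂Π` and `∂(ΠD)` are homogeneous,
passing to the component of degree `h + j - 2` lets us take `c₁ = a` homogeneous of degree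
`j - 2`. At the points `x_m = (h - m, -h - m)`, `1 ≤ m ≤ h`, the product `Π` vanishes but `Π*`
does not, and evaluating `(u - v)·∂P = P - P*` there for `P = Π` and `P = ΠD` turns the identity
into `D*(x_m) = ((u+v)·a)(x_m)`. So the form `G = D* - (u+v)·a` of degree `j - 1 < h` vanishes
at `h` points of the line `u - v = 2h`, hence on all of it. But `G(h, -h) = D(-h, h)`, which is
nonzero: at `(-h, h)` the first product defining `D` vanishes and the second does not.
-/

noncomputable section

abbrev R2 : Type := MvPolynomial (Fin 2) ℚ

def uu : R2 := MvPolynomial.X 0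
def vv : R2 := MvPolynomial.X 1

/-- The involution of `R2 = ℚ[u,v]` swapping `u` and `v`; `P*`. -/
def swapUV (P : R2) : R2 := MvPolynomial.rename (Equiv.swap (0 : Fin 2) 1) P

/-- `Q_k(y) = ∏_{j=0}^{k} (y + j·u + (k−j)·v)` in `R2[y]`. -/
def Qp (k : ℕ) : Polynomial R2 :=
  ∏ j ∈ Finset.range (k + 1),
    (Polynomial.X + Polynomial.C ((j : R2) * uu + ((k - j : ℕ) : R2) * vv))

/-- `C_{d+1} = ∏_{j=0}^{d} (j·u + (d−j)·v)` in `R2`. -/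
def Cdtop (d : ℕ) : R2 :=
  ∏ j ∈ Finset.range (d + 1), ((j : R2) * uu + ((d - j : ℕ) : R2) * vv)

/-- `Q_k(x_i)` as an element of `R2[x_1,…,x_r]`. -/
def Qm (r k : ℕ) (i : Fin r) : MvPolynomial (Fin r) R2 :=
  ∏ j ∈ Finset.range (k + 1),
    (MvPolynomial.X i + MvPolynomial.C ((j : R2) * uu + ((k - j : ℕ) : R2) * vv))

namespace MvPolynomial
variable {σ R : Type*}

section CommSemiring
variable [CommSemiring R]

attribute [local instance] MvPolynomial.gradedAlgebra in
theorem homogeneousComponent_mul_of_isHomogeneous {c g : MvPolynomial σ R} {n : ℕ}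
    (hg : g.IsHomogeneous n) (N : ℕ) :
    homogeneousComponent N (c * g) =
      if n ≤ N then homogeneousComponent (N - n) c * g else 0 := by
  simpa [← decomposition.decompose'_apply] using
    DirectSum.coe_decompose_mul_of_right_mem (𝒜 := homogeneousSubmodule σ R) (a := c) N hg

theorem exists_homogeneousComponent_mul_eq {g : MvPolynomial σ R} {n : ℕ}
    (hg : g.IsHomogeneous n) (c : MvPolynomial σ R) (N : ℕ) :
    ∃ a : MvPolynomial σ R, a.IsHomogeneous (N - n) ∧ homogeneousComponent N (c * g) = a * g := by
  rw [homogeneousComponent_mul_of_isHomogeneous hg]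
  split_ifs
  · exact ⟨_, homogeneousComponent_isHomogeneous _ c, rfl⟩
  · exact ⟨0, isHomogeneous_zero _ _ _, (zero_mul g).symm⟩

theorem exists_isHomogeneous_of_mem_span_pair {f g₁ g₂ : MvPolynomial σ R} {N n₁ n₂ : ℕ}
    (hf : f.IsHomogeneous N) (hg₁ : g₁.IsHomogeneous n₁) (hg₂ : g₂.IsHomogeneous n₂)
    (hmem : f ∈ Ideal.span {g₁, g₂}) :
    ∃ a₁ a₂ : MvPolynomial σ R, a₁.IsHomogeneous (N - n₁) ∧ a₂.IsHomogeneous (N - n₂) ∧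
      a₁ * g₁ + a₂ * g₂ = f := by
  obtain ⟨c₁, c₂, hc⟩ := Ideal.mem_span_pair.mp hmem
  obtain ⟨a₁, ha₁, h₁⟩ := exists_homogeneousComponent_mul_eq hg₁ c₁ N
  obtain ⟨a₂, ha₂, h₂⟩ := exists_homogeneousComponent_mul_eq hg₂ c₂ N
  refine ⟨a₁, a₂, ha₁, ha₂, ?_⟩
  rw [← h₁, ← h₂, ← map_add, hc, homogeneousComponent_eq_self hf]

theorem IsHomogeneous.of_mul_left [NoZeroDivisors R] {p f : MvPolynomial σ R} {m n : ℕ}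
    (hp : p.IsHomogeneous m) (hp0 : p ≠ 0) (hpf : (p * f).IsHomogeneous (m + n)) :
    f.IsHomogeneous n := by
  have hcomp : ∀ i ≠ n, homogeneousComponent i f = 0 := by
    intro i hi
    have hi' := homogeneousComponent_mul_of_isHomogeneous (c := f) hp (i + m)
    rw [if_pos (Nat.le_add_left m i), Nat.add_sub_cancel, mul_comm,
      homogeneousComponent_of_mem hpf, if_neg (by omega)] at hi'
    exact (mul_eq_zero.mp hi'.symm).resolve_right hp0
  have hf : homogeneousComponent n f = f := by
    ext d
    rw [coeff_homogeneousComponent]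
    split_ifs with hd
    · rfl
    · simpa [coeff_homogeneousComponent, eq_comm] using congrArg (coeff d) (hcomp _ hd)
  exact hf ▸ homogeneousComponent_isHomogeneous n f

end CommSemiring

theorem eval_add_smul_eq_zero_of_totalDegree_lt [Field R] (p : MvPolynomial σ R) (x dx : σ → R)
    (S : Finset R) (hS : p.totalDegree < S.card) (hp : ∀ t ∈ S, eval (x + t • dx) p = 0)
    (t : R) : eval (x + t • dx) p = 0 := by
  set γ : σ → Polynomial R := fun i => Polynomial.C (dx i) * Polynomial.X + Polynomial.C (x i)
  have heval : ∀ t, (aeval γ p).eval t = eval (x + t • dx) p := by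
    intro t
    rw [← Polynomial.coe_aeval_eq_eval, comp_aeval_apply]
    simp only [γ, Polynomial.coe_aeval_eq_eval, Polynomial.eval_add, Polynomial.eval_mul,
      Polynomial.eval_C, Polynomial.eval_X, mul_comm, add_comm]
    rfl
  have hdeg : (aeval γ p).natDegree ≤ p.totalDegree * 1 :=
    aeval_natDegree_le p le_rfl γ fun _ => Polynomial.natDegree_linear_le
  have hzero : aeval γ p = 0 :=
    Polynomial.eq_zero_of_natDegree_lt_card_of_eval_eq_zero' _ S
      (fun t ht => (heval t).trans (hp t ht)) (by omega)
  rw [← heval, hzero, Polynomial.eval_zero]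

end MvPolynomial

open MvPolynomial Finset

-- `Π = factorProd (2 * h) (range h)`; the products in the statement unfold to `factorProd`.
def factorProd (d : ℕ) (s : Finset ℕ) : R2 :=
  ∏ l ∈ s, ((l : R2) * vv + ((d - l : ℕ) : R2) * uu)

theorem eval_swapUV (x y : ℚ) (P : R2) : eval ![x, y] (swapUV P) = eval ![y, x] P := by
  rw [swapUV, eval_rename]
  congr 2
  funext i
  fin_cases i <;> rfl

theorem isHomogeneous_swapUV {P : R2} {n : ℕ} (hP : P.IsHomogeneous n) :
    (swapUV P).IsHomogeneous n :=
  hP.rename_isHomogeneous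

theorem uu_sub_vv_ne_zero : uu - vv ≠ 0 :=
  sub_ne_zero.mpr (X_injective.ne (by decide))

theorem isHomogeneous_of_uu_sub_vv_mul {f g : R2} {n : ℕ} (hg : g.IsHomogeneous (n + 1))
    (hfg : (uu - vv) * f = g) : f.IsHomogeneous n := by
  have huv : (uu - vv).IsHomogeneous 1 := (isHomogeneous_X ℚ 0).sub (isHomogeneous_X ℚ 1)
  exact huv.of_mul_left uu_sub_vv_ne_zero (by rw [hfg, add_comm]; exact hg)

theorem isHomogeneous_of_uu_sub_vv_mul_eq_sub_swapUV {P dP : R2} {n : ℕ}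
    (hP : P.IsHomogeneous (n + 1)) (hdP : (uu - vv) * dP = P - swapUV P) : dP.IsHomogeneous n :=
  isHomogeneous_of_uu_sub_vv_mul (hP.sub (isHomogeneous_swapUV hP)) hdP

theorem eval_swapUV_eq_of_eval_eq_zero {P D dP dPD a r : R2} {x y : ℚ}
    (hdP : (uu - vv) * dP = P - swapUV P) (hdPD : (uu - vv) * dPD = P * D - swapUV (P * D))
    (hdPD_eq : a * ((uu + vv) * dP) + r * ((uu + vv) * P) = dPD)
    (hP : eval ![x, y] P = 0) (hP' : eval ![y, x] P ≠ 0) :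
    eval ![x, y] (swapUV D) = eval ![x, y] ((uu + vv) * a) := by
  have e1 := congrArg (eval ![x, y]) hdP
  have e2 := congrArg (eval ![x, y]) hdPD
  have e3 := congrArg (eval ![x, y]) hdPD_eq
  simp only [map_mul, map_sub, map_add, eval_swapUV, hP] at e1 e2 e3 ⊢
  apply mul_left_cancel₀ hP'
  linear_combination e2 + (eval ![x, y] uu - eval ![x, y] vv) * e3 -
    eval ![x, y] a * (eval ![x, y] uu + eval ![x, y] vv) * e1

theorem isHomogeneous_factorProd (d : ℕ) (s : Finset ℕ) :
    (factorProd d s).IsHomogeneous s.card := by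
  have hX : ∀ (i : Fin 2) (c : ℕ), ((c : R2) * X i).IsHomogeneous 1 := fun i c => by
    simpa using isHomogeneous_C_mul_X (c : ℚ) i
  simpa [factorProd, uu, vv] using
    IsHomogeneous.prod s _ (fun _ => 1) fun l _ => (hX 1 l).add (hX 0 (d - l))

theorem eval_factor (x y : ℚ) {d l : ℕ} (hl : l ≤ d) :
    eval ![x, y] ((l : R2) * vv + ((d - l : ℕ) : R2) * uu) = l * y + (d - l) * x := by
  simp [uu, vv, Nat.cast_sub hl]

theorem eval_factorProd_eq_zero {x y : ℚ} {d l : ℕ} {s : Finset ℕ} (hl : l ∈ s) (hld : l ≤ d)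
    (hxy : l * y + (d - l) * x = 0) : eval ![x, y] (factorProd d s) = 0 := by
  rw [factorProd, map_prod]
  exact prod_eq_zero hl ((eval_factor x y hld).trans hxy)

theorem eval_factorProd_ne_zero {h : ℕ} (hh : 0 < h) {s : Finset ℕ} (hs : ∀ l ∈ s, l < h)
    {t : ℚ} (ht : 0 ≤ t) : eval ![-h - t, h - t] (factorProd (2 * h) s) ≠ 0 := by
  rw [factorProd, map_prod]
  refine prod_ne_zero_iff.mpr fun l hl => ?_
  have hlh : (l : ℚ) < h := by exact_mod_cast hs l hl
  have hh' : (0 : ℚ) < h := by exact_mod_cast hh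
  rw [eval_factor _ _ (by linarith [hs l hl] : l ≤ 2 * h)]
  push_cast
  nlinarith

theorem isHomogeneous_of_uu_sub_vv_mul_eq_factorProd_sub {h j : ℕ} {D : R2}
    (hD : (uu - vv) * D = factorProd (2 * h) (Icc (h - j + 1) h) - factorProd (2 * h) (range j))
    (hj : 0 < j) (hjh : j ≤ h) :
    D.IsHomogeneous (j - 1) := by
  refine isHomogeneous_of_uu_sub_vv_mul ?_ hD
  have hA := isHomogeneous_factorProd (2 * h) (Icc (h - j + 1) h)
  have hB := isHomogeneous_factorProd (2 * h) (range j)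
  rw [Nat.card_Icc, show h + 1 - (h - j + 1) = j by omega] at hA
  rw [card_range] at hB
  rw [Nat.sub_add_cancel hj]
  exact hA.sub hB

theorem eval_ne_zero_of_uu_sub_vv_mul_eq_factorProd_sub {h j : ℕ} {D : R2}
    (hD : (uu - vv) * D = factorProd (2 * h) (Icc (h - j + 1) h) - factorProd (2 * h) (range j))
    (hj : 0 < j) (hjh : j ≤ h) :
    eval ![-(h : ℚ), h] D ≠ 0 := by
  have hA : eval ![-(h : ℚ), h] (factorProd (2 * h) (Icc (h - j + 1) h)) = 0 :=
    eval_factorProd_eq_zero (right_mem_Icc.mpr (by omega)) (by omega) (by push_cast; ring)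
  have hB : eval ![-(h : ℚ), h] (factorProd (2 * h) (range j)) ≠ 0 := by
    simpa using eval_factorProd_ne_zero (by omega) (fun l hl => (mem_range.mp hl).trans_le hjh)
      le_rfl
  have hDeval := congrArg (eval ![-(h : ℚ), h]) hD
  simp only [map_mul, map_sub, hA, zero_sub] at hDeval
  intro hzero
  rw [hzero, mul_zero] at hDeval
  exact hB (neg_eq_zero.mp hDeval.symm)

theorem eval_eq_zero_of_forall_eval_eq_zero_of_totalDegree_lt {G : R2} {c : ℚ} {n : ℕ}
    (hG : G.totalDegree < n) (hvan : ∀ m : ℕ, 1 ≤ m → m ≤ n → eval ![c - m, -c - m] G = 0) :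
    eval ![c, -c] G = 0 := by
  have hline : ∀ t : ℚ, ![c, -c] + t • ![-1, -1] = ![c - t, -c - t] := fun t => by
    ext i
    fin_cases i <;> simp [sub_eq_add_neg]
  simpa [hline] using eval_add_smul_eq_zero_of_totalDegree_lt G ![c, -c] ![-1, -1]
    ((Icc 1 n).image Nat.cast)
    (by rwa [card_image_of_injective _ Nat.cast_injective, Nat.card_Icc, Nat.add_sub_cancel])
    (fun t ht => by
      obtain ⟨m, hm, rfl⟩ := mem_image.mp ht
      rw [hline]
      exact hvan m (mem_Icc.mp hm).1 (mem_Icc.mp hm).2) 0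

theorem stmt15_general (h j : ℕ) (hj1 : 1 < j) (hj2 : j < h) (d : ℕ) (hd : d = 2 * h)
    (Dj : R2)
    (hDj : (uu - vv) * Dj =
        (∏ l ∈ Finset.Icc (h - j + 1) h, ((l : R2) * vv + ((d - l : ℕ) : R2) * uu)) -
          ∏ l ∈ Finset.range j, ((l : R2) * vv + ((d - l : ℕ) : R2) * uu))
    (DPi : R2)
    (hDPi : (uu - vv) * DPi =
        (∏ l ∈ Finset.range h, ((l : R2) * vv + ((d - l : ℕ) : R2) * uu)) -
          swapUV (∏ l ∈ Finset.range h, ((l : R2) * vv + ((d - l : ℕ) : R2) * uu)))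
    (DPiDj : R2)
    (hDPiDj : (uu - vv) * DPiDj =
        (∏ l ∈ Finset.range h, ((l : R2) * vv + ((d - l : ℕ) : R2) * uu)) * Dj -
          swapUV ((∏ l ∈ Finset.range h, ((l : R2) * vv + ((d - l : ℕ) : R2) * uu)) * Dj)) :
    DPiDj ∉ Ideal.span ({(uu + vv) * DPi,
      (uu + vv) * ∏ l ∈ Finset.range h, ((l : R2) * vv + ((d - l : ℕ) : R2) * uu)} : Set R2) := by
  subst hd
  intro hmem
  have hPhom : (factorProd (2 * h) (range h)).IsHomogeneous (h - 1 + 1) := by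
    simpa [Nat.sub_add_cancel (by omega : 1 ≤ h)] using isHomogeneous_factorProd (2 * h) (range h)
  have hDjhom := isHomogeneous_of_uu_sub_vv_mul_eq_factorProd_sub hDj (by omega) hj2.le
  have hPDjhom := hPhom.mul hDjhom
  rw [show h - 1 + 1 + (j - 1) = h + j - 2 + 1 by omega] at hPDjhom
  have huv : (uu + vv).IsHomogeneous 1 := (isHomogeneous_X ℚ 0).add (isHomogeneous_X ℚ 1)
  obtain ⟨a, r, ha, -, hfa⟩ := exists_isHomogeneous_of_mem_span_pair
    (isHomogeneous_of_uu_sub_vv_mul_eq_sub_swapUV hPDjhom hDPiDj)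
    (huv.mul (isHomogeneous_of_uu_sub_vv_mul_eq_sub_swapUV hPhom hDPi)) (huv.mul hPhom) hmem
  have huva := huv.mul ha
  rw [show 1 + (h + j - 2 - (1 + (h - 1))) = j - 1 by omega] at huva
  set G := swapUV Dj - (uu + vv) * a with hG_def
  have hGdeg : G.totalDegree < h :=
    ((isHomogeneous_swapUV hDjhom).sub huva).totalDegree_le.trans_lt (by omega)
  have hG : ∀ m : ℕ, 1 ≤ m → m ≤ h → eval ![(h : ℚ) - m, -h - m] G = 0 := by
    intro m hm1 hmh
    rw [hG_def, map_sub, sub_eq_zero]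
    refine eval_swapUV_eq_of_eval_eq_zero hDPi hDPiDj hfa ?_
      (eval_factorProd_ne_zero (by omega) (fun l => mem_range.mp) (Nat.cast_nonneg m))
    refine eval_factorProd_eq_zero (mem_range.mpr (by omega : h - m < h)) (by omega) ?_
    rw [Nat.cast_sub hmh]
    push_cast
    ring
  have hG0 : eval ![(h : ℚ), -h] G ≠ 0 := by
    simpa [hG_def, eval_swapUV, uu, vv] using
      eval_ne_zero_of_uu_sub_vv_mul_eq_factorProd_sub hDj (by omega) hj2.le
  exact hG0 (eval_eq_zero_of_forall_eval_eq_zero_of_totalDegree_lt hGdeg hG)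

/-- Proposition 4.5, claim (1): for `d = 2h`, `1 < j < h`, the Thom polynomial
`∂(Π·D_j)` does not lie in the ideal `((u+v)·∂Π, (u+v)·Π)`. -/
theorem stmt15 (h j : ℕ) (hh : 2 < h) (hj1 : 1 < j) (hj2 : j < h) (d : ℕ) (hd : d = 2 * h)
    (Dj : R2)
    (hDj : (uu - vv) * Dj =
        (∏ l ∈ Finset.Icc (h - j + 1) h, ((l : R2) * vv + ((d - l : ℕ) : R2) * uu)) -
          ∏ l ∈ Finset.range j, ((l : R2) * vv + ((d - l : ℕ) : R2) * uu))
    (DPi : R2)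
    (hDPi : (uu - vv) * DPi =
        (∏ l ∈ Finset.range h, ((l : R2) * vv + ((d - l : ℕ) : R2) * uu)) -
          swapUV (∏ l ∈ Finset.range h, ((l : R2) * vv + ((d - l : ℕ) : R2) * uu)))
    (DPiDj : R2)
    (hDPiDj : (uu - vv) * DPiDj =
        (∏ l ∈ Finset.range h, ((l : R2) * vv + ((d - l : ℕ) : R2) * uu)) * Dj -
          swapUV ((∏ l ∈ Finset.range h, ((l : R2) * vv + ((d - l : ℕ) : R2) * uu)) * Dj)) :
    DPiDj ∉ Ideal.span ({(uu + vv) * DPi,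
      (uu + vv) * ∏ l ∈ Finset.range h, ((l : R2) * vv + ((d - l : ℕ) : R2) * uu)} : Set R2) :=
  stmt15_general h j hj1 hj2 d hd Dj hDj DPi hDPi DPiDj hDPiDj
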